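/- Under the setting of the p-level cascade extended state observer (matrices A, b, c, d; gains l_j = l(ω_j), ω_j = α^{j−1}ω₁; extended state z = (e, e', F*)ᵀ with e'' = F* − b̂μ; output y = e − n; level errors ζ̃_i = z − ξ_i − b·(bᵀ∑_{j<i} ξ_j)), the aggregated observation error ζ̃ = (ζ̃₁ᵀ, …, ζ̃_pᵀ)ᵀ : ℝ → ℝ^{3p} satisfies the linear differential equation ζ̃'(t) = H_ζ·ζ̃(t) + δ·(F*)'(t) + γ·n(t), where H_ζ ∈ ℝ^{3p×3p} is block lower triangular with diagonal blocks A − l_i·cᵀ (i = 1, …, p), subdiagonal blocks (l_i − b·(bᵀl_{i−1}))·cᵀ at position (i, i−1), blocks −b·(bᵀl_j − bᵀl_{j+1})·cᵀ at positions (i, j) for j ≤ i−2, δ = (bᵀ, …, bᵀ)ᵀ ∈ ℝ^{3p}, and γ ∈ ℝ^{3p} has first block l₁ and each block i ≥ 2 equal to (bᵀl₁)·b. -/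

import Mathlib

open Matrix

noncomputable section

/-- System matrix `A` of the extended error-domain state. -/
def Amat : Matrix (Fin 3) (Fin 3) ℝ := !![0,1,0; 0,0,1; 0,0,0]

/-- Vector `b = (0,0,1)ᵀ`. -/
def bvec : Fin 3 → ℝ := ![0,0,1]

/-- Vector `c = (1,0,0)ᵀ`. -/
def cvec : Fin 3 → ℝ := ![1,0,0]

/-- Vector `d = (0,1,0)ᵀ`. -/
def dvec : Fin 3 → ℝ := ![0,1,0]

/-- Bandwidth-parameterized observer gain `l(ω) = (3ω, 3ω², ω³)ᵀ`. -/
def gain (ω : ℝ) : Fin 3 → ℝ := ![3 * ω, 3 * ω ^ 2, ω ^ 3]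

/-- Level-`i` observation error `ζ̃ᵢ = z − ξᵢ − b (bᵀ ∑_{j=1}^{i-1} ξⱼ)`. -/
def zetaErr (e e' F : ℝ → ℝ) (ξ : ℕ → ℝ → Fin 3 → ℝ) (i : ℕ) (t : ℝ) : Fin 3 → ℝ :=
  ![e t, e' t, F t] - ξ i t - (bvec ⬝ᵥ ∑ j ∈ Finset.Icc 1 (i - 1), ξ j t) • bvec

/-- The block lower triangular system matrix `H_ζ ∈ ℝ^{3p×3p}` of the aggregated
observation-error dynamics.  The block index `i : Fin p` corresponds to cascade level
`i+1`, whose bandwidth is `ω_{i+1} = α^i ω₁`.  Diagonal blocks are `A − l(ωᵢ)cᵀ`,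
subdiagonal blocks are `(lᵢ − b(bᵀl_{i−1}))cᵀ`, and the blocks at positions `(i,j)` with
`j ≤ i − 2` are `−b(bᵀlⱼ − bᵀl_{j+1})cᵀ`. -/
def Hzeta (p : ℕ) (α ω₁ : ℝ) : Matrix (Fin p × Fin 3) (Fin p × Fin 3) ℝ :=
  fun q r =>
    if q.1 = r.1 then
      (Amat - vecMulVec (gain (α ^ (q.1 : ℕ) * ω₁)) cvec) q.2 r.2
    else if (r.1 : ℕ) + 1 = (q.1 : ℕ) then
      ((gain (α ^ (q.1 : ℕ) * ω₁) - (bvec ⬝ᵥ gain (α ^ (r.1 : ℕ) * ω₁)) • bvec) q.2) * cvec r.2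
    else if (r.1 : ℕ) + 2 ≤ (q.1 : ℕ) then
      -(bvec q.2 * (bvec ⬝ᵥ gain (α ^ (r.1 : ℕ) * ω₁)
          - bvec ⬝ᵥ gain (α ^ ((r.1 : ℕ) + 1) * ω₁)) * cvec r.2)
    else 0

/-- The disturbance input vector `δ = (bᵀ, …, bᵀ)ᵀ ∈ ℝ^{3p}`. -/
def deltaVec (p : ℕ) : Fin p × Fin 3 → ℝ := fun q => bvec q.2

/-- The noise input vector `γ ∈ ℝ^{3p}`: first block `l₁`, each block `i ≥ 2` equal to
`(bᵀl₁) b`. -/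
def gammaVec (p : ℕ) (α ω₁ : ℝ) : Fin p × Fin 3 → ℝ :=
  fun q => if (q.1 : ℕ) = 0 then gain ω₁ q.2 else (bvec ⬝ᵥ gain ω₁) * bvec q.2

/-! With `z = (e, e', F*)` the plant reads `z' = A z - b̂ μ d + (F*)' b`. Because `A b = d`,
`cᵀ b = 0`, `bᵀ A = 0` and `bᵀ d = 0`, subtracting the observer equations gives
`ζ̃ᵢ' = (A - lᵢ cᵀ) ζ̃ᵢ + (cᵀ ζ̃ᵢ₋₁) lᵢ + (F*)' b - (∑_{j<i} bᵀ ξⱼ') b` for `i ≥ 2` (and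
`ζ̃₁' = (A - l₁ cᵀ) ζ̃₁ + (F*)' b + n l₁`), where `bᵀ ξⱼ' = bᵀ lⱼ (cᵀ ζ̃ⱼ - cᵀ ζ̃ⱼ₋₁)` for `j ≥ 2`
and `bᵀ ξ₁' = bᵀ l₁ (cᵀ ζ̃₁ - n)`. Summation by parts turns
the last sum into `bᵀ lᵢ₋₁ cᵀ ζ̃ᵢ₋₁ + ∑_{j ≤ i-2} (bᵀ lⱼ - bᵀ lⱼ₊₁) cᵀ ζ̃ⱼ - bᵀ l₁ n`, which are
exactly the off-diagonal blocks of `H_ζ` and the noise input `γ`. -/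

open Finset

lemma Amat_mulVec_vec3 (a b c : ℝ) : Amat *ᵥ ![a, b, c] = ![b, c, 0] := by
  ext k; fin_cases k <;> simp [Amat, mulVec, dotProduct, Fin.sum_univ_three]

lemma Amat_mulVec_bvec : Amat *ᵥ bvec = dvec := by
  simpa [bvec, dvec] using Amat_mulVec_vec3 0 0 1

lemma bvec_dotProduct_Amat_mulVec (v : Fin 3 → ℝ) : bvec ⬝ᵥ Amat *ᵥ v = 0 := by
  simp [bvec, Amat, mulVec, dotProduct, Fin.sum_univ_three]

lemma bvec_dotProduct_dvec : bvec ⬝ᵥ dvec = 0 := by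
  simp [bvec, dvec, dotProduct, Fin.sum_univ_three]

lemma cvec_dotProduct_bvec : cvec ⬝ᵥ bvec = 0 := by
  simp [bvec, cvec, dotProduct, Fin.sum_univ_three]

lemma cvec_dotProduct_vec3 (a b c : ℝ) : cvec ⬝ᵥ ![a, b, c] = a := by
  simp [cvec, dotProduct, Fin.sum_univ_three]

lemma sub_vecMulVec_mulVec {m n R : Type*} [Fintype n] [CommRing R] (M : Matrix m n R)
    (l : m → R) (c v : n → R) : (M - vecMulVec l c) *ᵥ v = M *ᵥ v - (c ⬝ᵥ v) • l := by
  rw [sub_mulVec, vecMulVec_mulVec, op_smul_eq_smul]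

section Calculus

variable {𝕜 : Type*} [NontriviallyNormedField 𝕜] {t : 𝕜}

lemma HasDerivAt.const_dotProduct {ι : Type*} [Fintype ι] {f : 𝕜 → ι → 𝕜} {f' : ι → 𝕜}
    (u : ι → 𝕜) (hf : HasDerivAt f f' t) : HasDerivAt (fun s => u ⬝ᵥ f s) (u ⬝ᵥ f') t := by
  simpa only [dotProduct] using HasDerivAt.fun_sum fun k _ => (hasDerivAt_pi.1 hf k).const_mul (u k)

lemma hasDerivAt_vec3 {f g h : 𝕜 → 𝕜} {f' g' h' : 𝕜} (hf : HasDerivAt f f' t)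
    (hg : HasDerivAt g g' t) (hh : HasDerivAt h h' t) :
    HasDerivAt (fun s => ![f s, g s, h s]) ![f', g', h'] t := by
  refine hasDerivAt_pi.2 fun k => ?_
  fin_cases k <;> simpa

lemma hasDerivAt_prod_pi_iff {ι κ : Type*} [Fintype ι] [Fintype κ] (f : ι → 𝕜 → κ → 𝕜)
    {v : ι × κ → 𝕜} :
    HasDerivAt (fun s (x : ι × κ) => f x.1 s x.2) v t
      ↔ ∀ i, HasDerivAt (f i) (fun k => v (i, k)) t := by
  simp only [hasDerivAt_pi, Prod.forall]

end Calculus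

lemma sum_Icc_eq_summation_by_parts (β x y : ℕ → ℝ) (ν : ℝ) (m : ℕ)
    (h₁ : y 1 = β 0 * (x 1 - ν)) (h : ∀ j, 1 ≤ j → j ≤ m → y (j + 1) = β j * (x (j + 1) - x j)) :
    ∑ j ∈ Icc 1 (m + 1), y j
      = β m * x (m + 1) + ∑ r ∈ range m, (β r - β (r + 1)) * x (r + 1) - β 0 * ν := by
  induction m with
  | zero => simp [h₁, mul_sub]
  | succ m ih =>
    rw [sum_Icc_succ_top (by omega), ih fun j hj hjm => h j hj (by omega),
      h (m + 1) (by omega) le_rfl, sum_range_succ]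
    ring

/-- Block `(i, j)` of `H_ζ` for an arbitrary gain sequence: block `i` belongs to cascade level
`i + 1`, whose gain is `g i`. -/
def Hblock (g : ℕ → Fin 3 → ℝ) (i j : ℕ) : Matrix (Fin 3) (Fin 3) ℝ :=
  if i = j then Amat - vecMulVec (g i) cvec
  else if j + 1 = i then vecMulVec (g i - (bvec ⬝ᵥ g j) • bvec) cvec
  else if j + 2 ≤ i then -vecMulVec ((bvec ⬝ᵥ g j - bvec ⬝ᵥ g (j + 1)) • bvec) cvec
  else 0

section Hblock

variable (g : ℕ → Fin 3 → ℝ) (Z : ℕ → Fin 3 → ℝ)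

lemma Hzeta_apply {p : ℕ} (α ω₁ : ℝ) (q r : Fin p) (k k' : Fin 3) :
    Hzeta p α ω₁ (q, k) (r, k') = Hblock (fun i => gain (α ^ i * ω₁)) q r k k' := by
  simp only [Hzeta, Hblock, Fin.ext_iff]
  split_ifs <;> simp [vecMulVec, mul_comm]

lemma Hblock_eq_zero {i j : ℕ} (h : i < j) : Hblock g i j = 0 := by
  rw [Hblock, if_neg (by omega), if_neg (by omega), if_neg (by omega)]

lemma Hzeta_mulVec_apply {p : ℕ} (α ω₁ : ℝ) (q : Fin p) (k : Fin 3) :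
    (Hzeta p α ω₁ *ᵥ fun x => Z x.1 x.2) (q, k)
      = (∑ j ∈ range (q + 1), Hblock (fun i => gain (α ^ i * ω₁)) q j *ᵥ Z j) k := by
  have hrow : (Hzeta p α ω₁ *ᵥ fun x => Z x.1 x.2) (q, k)
      = (∑ j ∈ range p, Hblock (fun i => gain (α ^ i * ω₁)) q j *ᵥ Z j) k := by
    rw [Finset.sum_apply, ← Fin.sum_univ_eq_sum_range (fun j => (Hblock _ q j *ᵥ Z j) k) p]
    simp only [mulVec, dotProduct, Fintype.sum_prod_type, Hzeta_apply]
  rw [hrow, ← sum_range_add_sum_Ico _ q.isLt, sum_eq_zero (s := Ico _ _) fun j hj => by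
    rw [Hblock_eq_zero _ (by simp at hj; omega), zero_mulVec], add_zero]

lemma sum_Hblock_mulVec_zero :
    ∑ j ∈ range 1, Hblock g 0 j *ᵥ Z j = (Amat - vecMulVec (g 0) cvec) *ᵥ Z 0 := by
  simp [Hblock]

lemma sum_Hblock_mulVec_succ (m : ℕ) :
    ∑ j ∈ range (m + 2), Hblock g (m + 1) j *ᵥ Z j
      = (Amat - vecMulVec (g (m + 1)) cvec) *ᵥ Z (m + 1)
        + (cvec ⬝ᵥ Z m) • (g (m + 1) - (bvec ⬝ᵥ g m) • bvec)
        - (∑ r ∈ range m, (bvec ⬝ᵥ g r - bvec ⬝ᵥ g (r + 1)) * cvec ⬝ᵥ Z r) • bvec := by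
  have hlow : ∀ r ∈ range m, Hblock g (m + 1) r *ᵥ Z r
      = -(((bvec ⬝ᵥ g r - bvec ⬝ᵥ g (r + 1)) * cvec ⬝ᵥ Z r) • bvec) := fun r hr => by
    rw [mem_range] at hr
    rw [Hblock, if_neg (by omega), if_neg (by omega), if_pos (by omega), neg_mulVec,
      vecMulVec_mulVec, op_smul_eq_smul, smul_smul, mul_comm]
  rw [sum_range_succ, sum_range_succ, sum_congr rfl hlow, sum_neg_distrib, ← sum_smul,
    Hblock, if_neg (by omega), if_pos rfl, Hblock, if_pos rfl, vecMulVec_mulVec, op_smul_eq_smul]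
  abel

end Hblock

lemma hasDerivAt_extendedState {μ e e' e'' F F' : ℝ → ℝ} {bhat t : ℝ}
    (he : HasDerivAt e (e' t) t) (he' : HasDerivAt e' (e'' t) t) (hF : HasDerivAt F (F' t) t)
    (hdyn : e'' t = F t - bhat * μ t) :
    HasDerivAt (fun s => ![e s, e' s, F s])
      (Amat *ᵥ ![e t, e' t, F t] - (bhat * μ t) • dvec + F' t • bvec) t := by
  convert hasDerivAt_vec3 he he' hF using 1
  ext k; fin_cases k <;> simp [Amat_mulVec_vec3, dvec, bvec, hdyn]

section ObservationError

variable {e e' F μ n F' : ℝ → ℝ} {ξ ξ' : ℕ → ℝ → Fin 3 → ℝ} {bhat t : ℝ}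

lemma cvec_dotProduct_zetaErr (i : ℕ) :
    cvec ⬝ᵥ zetaErr e e' F ξ i t = e t - cvec ⬝ᵥ ξ i t := by
  simp only [zetaErr, dotProduct_sub, dotProduct_smul, cvec_dotProduct_bvec,
    cvec_dotProduct_vec3, smul_zero, sub_zero]

lemma Amat_mulVec_zetaErr (i : ℕ) :
    Amat *ᵥ zetaErr e e' F ξ i t = Amat *ᵥ ![e t, e' t, F t] - Amat *ᵥ ξ i t
      - (bvec ⬝ᵥ ∑ j ∈ Icc 1 (i - 1), ξ j t) • dvec := by
  rw [zetaErr, mulVec_sub, mulVec_sub, mulVec_smul, Amat_mulVec_bvec]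

lemma hasDerivAt_zetaErr {z' : Fin 3 → ℝ} {i : ℕ}
    (hz : HasDerivAt (fun s => ![e s, e' s, F s]) z' t)
    (hξ : ∀ j ∈ Icc 1 i, HasDerivAt (ξ j) (ξ' j t) t) (hi : 1 ≤ i) :
    HasDerivAt (zetaErr e e' F ξ i)
      (z' - ξ' i t - (bvec ⬝ᵥ ∑ j ∈ Icc 1 (i - 1), ξ' j t) • bvec) t := by
  have hsum : HasDerivAt (fun s => ∑ j ∈ Icc 1 (i - 1), ξ j s) (∑ j ∈ Icc 1 (i - 1), ξ' j t) t :=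
    HasDerivAt.fun_sum fun j hj => hξ j (Icc_subset_Icc_right (Nat.sub_le i 1) hj)
  exact (hz.sub (hξ i (by simp [hi]))).sub ((hsum.const_dotProduct bvec).smul_const bvec)

variable {l : Fin 3 → ℝ}

lemma extendedState_deriv_sub_observer_one
    (hobs1 : ξ' 1 t = Amat *ᵥ ξ 1 t - (bhat * μ t) • dvec
      + ((e t - n t) - cvec ⬝ᵥ ξ 1 t) • l) :
    Amat *ᵥ ![e t, e' t, F t] - (bhat * μ t) • dvec + F' t • bvec - ξ' 1 t
      = (Amat - vecMulVec l cvec) *ᵥ zetaErr e e' F ξ 1 t + F' t • bvec + n t • l := by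
  rw [sub_vecMulVec_mulVec, Amat_mulVec_zetaErr, cvec_dotProduct_zetaErr, hobs1]
  simp only [Nat.sub_self, Icc_eq_empty_of_lt zero_lt_one, sum_empty, dotProduct_zero, zero_smul,
    sub_zero]
  module

lemma extendedState_deriv_sub_observer {i : ℕ}
    (hobs : ξ' i t = Amat *ᵥ ξ i t
      + (-(bhat * μ t) + bvec ⬝ᵥ ∑ j ∈ Icc 1 (i - 1), ξ j t) • dvec
      + (cvec ⬝ᵥ (ξ (i - 1) t - ξ i t)) • l) :
    Amat *ᵥ ![e t, e' t, F t] - (bhat * μ t) • dvec + F' t • bvec - ξ' i t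
      = (Amat - vecMulVec l cvec) *ᵥ zetaErr e e' F ξ i t
        + (cvec ⬝ᵥ zetaErr e e' F ξ (i - 1) t) • l + F' t • bvec := by
  rw [sub_vecMulVec_mulVec, Amat_mulVec_zetaErr, cvec_dotProduct_zetaErr,
    cvec_dotProduct_zetaErr, hobs, dotProduct_sub]
  module

lemma bvec_dotProduct_observer_one
    (hobs1 : ξ' 1 t = Amat *ᵥ ξ 1 t - (bhat * μ t) • dvec
      + ((e t - n t) - cvec ⬝ᵥ ξ 1 t) • l) :
    bvec ⬝ᵥ ξ' 1 t = (bvec ⬝ᵥ l) * (cvec ⬝ᵥ zetaErr e e' F ξ 1 t - n t) := by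
  rw [hobs1, cvec_dotProduct_zetaErr]
  simp only [dotProduct_add, dotProduct_sub, dotProduct_smul, bvec_dotProduct_Amat_mulVec,
    bvec_dotProduct_dvec, smul_eq_mul]
  ring

lemma bvec_dotProduct_observer {i : ℕ}
    (hobs : ξ' i t = Amat *ᵥ ξ i t
      + (-(bhat * μ t) + bvec ⬝ᵥ ∑ j ∈ Icc 1 (i - 1), ξ j t) • dvec
      + (cvec ⬝ᵥ (ξ (i - 1) t - ξ i t)) • l) :
    bvec ⬝ᵥ ξ' i t
      = (bvec ⬝ᵥ l) * (cvec ⬝ᵥ zetaErr e e' F ξ i t - cvec ⬝ᵥ zetaErr e e' F ξ (i - 1) t) := by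
  rw [hobs, cvec_dotProduct_zetaErr, cvec_dotProduct_zetaErr]
  simp only [dotProduct_add, dotProduct_sub, dotProduct_smul, bvec_dotProduct_Amat_mulVec,
    bvec_dotProduct_dvec, smul_eq_mul]
  ring

lemma hasDerivAt_zetaErr_one (g : ℕ → Fin 3 → ℝ)
    (hz : HasDerivAt (fun s => ![e s, e' s, F s])
      (Amat *ᵥ ![e t, e' t, F t] - (bhat * μ t) • dvec + F' t • bvec) t)
    (hobs1 : ξ' 1 t = Amat *ᵥ ξ 1 t - (bhat * μ t) • dvec + ((e t - n t) - cvec ⬝ᵥ ξ 1 t) • g 0)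
    (hξ : HasDerivAt (ξ 1) (ξ' 1 t) t) :
    HasDerivAt (zetaErr e e' F ξ 1)
      (∑ j ∈ range 1, Hblock g 0 j *ᵥ zetaErr e e' F ξ (j + 1) t + F' t • bvec + n t • g 0) t := by
  convert hasDerivAt_zetaErr hz (by simpa using hξ) le_rfl using 1
  rw [sum_Hblock_mulVec_zero, extendedState_deriv_sub_observer_one hobs1]
  simp

lemma hasDerivAt_zetaErr_add_two (g : ℕ → Fin 3 → ℝ) (m : ℕ)
    (hz : HasDerivAt (fun s => ![e s, e' s, F s])
      (Amat *ᵥ ![e t, e' t, F t] - (bhat * μ t) • dvec + F' t • bvec) t)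
    (hobs1 : ξ' 1 t = Amat *ᵥ ξ 1 t - (bhat * μ t) • dvec + ((e t - n t) - cvec ⬝ᵥ ξ 1 t) • g 0)
    (hξ : ∀ j ∈ Icc 1 (m + 2), HasDerivAt (ξ j) (ξ' j t) t)
    (hobs : ∀ i, 2 ≤ i → i ≤ m + 2 → ξ' i t = Amat *ᵥ ξ i t
      + (-(bhat * μ t) + bvec ⬝ᵥ ∑ j ∈ Icc 1 (i - 1), ξ j t) • dvec
      + (cvec ⬝ᵥ (ξ (i - 1) t - ξ i t)) • g (i - 1)) :
    HasDerivAt (zetaErr e e' F ξ (m + 2))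
      (∑ j ∈ range (m + 2), Hblock g (m + 1) j *ᵥ zetaErr e e' F ξ (j + 1) t + F' t • bvec
        + (n t * (bvec ⬝ᵥ g 0)) • bvec) t := by
  have hsum := sum_Icc_eq_summation_by_parts (fun j => bvec ⬝ᵥ g j)
    (fun j => cvec ⬝ᵥ zetaErr e e' F ξ j t) (fun j => bvec ⬝ᵥ ξ' j t) (n t) m
    (bvec_dotProduct_observer_one hobs1)
    (fun j hj hjm => bvec_dotProduct_observer (hobs (j + 1) (by omega) (by omega)))
  convert hasDerivAt_zetaErr hz hξ (by omega) using 1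
  rw [sum_Hblock_mulVec_succ, dotProduct_sum, show m + 2 - 1 = m + 1 from rfl, hsum,
    extendedState_deriv_sub_observer (hobs (m + 2) (by omega) le_rfl),
    show m + 2 - 1 = m + 1 from rfl]
  module

end ObservationError
theorem aggregated_observation_error_dynamics_general
    (p : ℕ) (ω₁ : ℝ) (α : ℝ)
    (bhat : ℝ)
    (μ n e e' e'' F F' : ℝ → ℝ)
    (he : ∀ t : ℝ, HasDerivAt e (e' t) t)
    (he' : ∀ t : ℝ, HasDerivAt e' (e'' t) t)
    (hF : ∀ t : ℝ, HasDerivAt F (F' t) t)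
    (hdyn : ∀ t : ℝ, e'' t = F t - bhat * μ t)
    (ξ ξ' : ℕ → ℝ → Fin 3 → ℝ)
    (hξ : ∀ i : ℕ, 1 ≤ i → i ≤ p → ∀ t : ℝ, HasDerivAt (ξ i) (ξ' i t) t)
    (hobs1 : ∀ t : ℝ, ξ' 1 t =
      Amat.mulVec (ξ 1 t) - (bhat * μ t) • dvec
        + (((e t - n t) - cvec ⬝ᵥ ξ 1 t)) • gain (α ^ (1 - 1) * ω₁))
    (hobsi : ∀ i : ℕ, 2 ≤ i → i ≤ p → ∀ t : ℝ, ξ' i t =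
      Amat.mulVec (ξ i t)
        + (-(bhat * μ t) + bvec ⬝ᵥ ∑ j ∈ Finset.Icc 1 (i - 1), ξ j t) • dvec
        + (cvec ⬝ᵥ (ξ (i - 1) t - ξ i t)) • gain (α ^ (i - 1) * ω₁)) :
    ∀ t : ℝ,
      HasDerivAt (fun s => fun q : Fin p × Fin 3 => zetaErr e e' F ξ ((q.1 : ℕ) + 1) s q.2)
        ((Hzeta p α ω₁).mulVec (fun q : Fin p × Fin 3 => zetaErr e e' F ξ ((q.1 : ℕ) + 1) t q.2)
          + F' t • deltaVec p + n t • gammaVec p α ω₁) t := by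
  intro t
  have hz := hasDerivAt_extendedState (he t) (he' t) (hF t) (hdyn t)
  refine (hasDerivAt_prod_pi_iff fun q : Fin p => zetaErr e e' F ξ (q + 1)).2 fun ⟨q, hq⟩ => ?_
  rcases q with _ | m
  · convert hasDerivAt_zetaErr_one (fun i => gain (α ^ i * ω₁)) hz (hobs1 t)
      (hξ 1 le_rfl hq t) using 1
    ext k
    simp [Hzeta_mulVec_apply (fun j => zetaErr e e' F ξ (j + 1) t) α ω₁, deltaVec, gammaVec]
  · convert hasDerivAt_zetaErr_add_two (fun i => gain (α ^ i * ω₁)) m hz (hobs1 t)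
      (fun j hj => hξ j (mem_Icc.1 hj).1 ((mem_Icc.1 hj).2.trans hq) t)
      (fun i hi hip => hobsi i hi (by omega) t) using 1
    ext k
    simp [Hzeta_mulVec_apply (fun j => zetaErr e e' F ξ (j + 1) t) α ω₁, deltaVec, gammaVec,
      mul_assoc]

/-- the aggregated observation error `ζ̃ = (ζ̃₁ᵀ, …, ζ̃_pᵀ)ᵀ` of the
`p`-level cascade extended state observer satisfies
`ζ̃' = H_ζ ζ̃ + δ (F*)' + γ n`. -/
theorem aggregated_observation_error_dynamics
    (p : ℕ) (hp : 2 ≤ p) (ω₁ : ℝ) (hω₁ : 0 < ω₁) (α : ℝ) (hα : 1 < α)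
    (bhat : ℝ) (hbhat : bhat ≠ 0)
    (μ n e e' e'' F F' : ℝ → ℝ)
    (he : ∀ t : ℝ, HasDerivAt e (e' t) t)
    (he' : ∀ t : ℝ, HasDerivAt e' (e'' t) t)
    (hF : ∀ t : ℝ, HasDerivAt F (F' t) t)
    (hdyn : ∀ t : ℝ, e'' t = F t - bhat * μ t)
    (ξ ξ' : ℕ → ℝ → Fin 3 → ℝ)
    (hξ : ∀ i : ℕ, 1 ≤ i → i ≤ p → ∀ t : ℝ, HasDerivAt (ξ i) (ξ' i t) t)
    (hobs1 : ∀ t : ℝ, ξ' 1 t =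
      Amat.mulVec (ξ 1 t) - (bhat * μ t) • dvec
        + (((e t - n t) - cvec ⬝ᵥ ξ 1 t)) • gain (α ^ (1 - 1) * ω₁))
    (hobsi : ∀ i : ℕ, 2 ≤ i → i ≤ p → ∀ t : ℝ, ξ' i t =
      Amat.mulVec (ξ i t)
        + (-(bhat * μ t) + bvec ⬝ᵥ ∑ j ∈ Finset.Icc 1 (i - 1), ξ j t) • dvec
        + (cvec ⬝ᵥ (ξ (i - 1) t - ξ i t)) • gain (α ^ (i - 1) * ω₁)) :
    ∀ t : ℝ,
      HasDerivAt (fun s => fun q : Fin p × Fin 3 => zetaErr e e' F ξ ((q.1 : ℕ) + 1) s q.2)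
        ((Hzeta p α ω₁).mulVec (fun q : Fin p × Fin 3 => zetaErr e e' F ξ ((q.1 : ℕ) + 1) t q.2)
          + F' t • deltaVec p + n t • gammaVec p α ω₁) t :=
  aggregated_observation_error_dynamics_general p ω₁ α bhat μ n e e' e'' F F' he he' hF hdyn ξ ξ' hξ
    hobs1 hobsi
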